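/- arXiv:1210.0372 — 4 statements merged into one kernel-verified Lean document; each statement's English description precedes it below -/
import Mathlib

section
/- Let h(z,x,y) = Σ_{k≥0} (−1)^k q^{k(k−1)/2} · ∏_{j=0}^{k−1}(x + q^j y) / ∏_{j=1}^{k}(1 − q^j) · z^k as a formal power series in z over the field ℚ(q,x,y). Then h satisfies the functional equation h(qz) = h(z) + x·z·h(qz) + y·z·h(q²z), where h(qz) denotes the series obtained by substituting qz for z. -/
noncomputable section
open PowerSeries Finset

/-- The field `ℚ(q, x, y)` of rational functions in three indeterminates. -/
abbrev K : Type := FractionRing (MvPolynomial (Fin 3) ℚ)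

/-- The indeterminate `q`. -/
def q : K := algebraMap (MvPolynomial (Fin 3) ℚ) K (MvPolynomial.X 0)
/-- The indeterminate `x`. -/
def x : K := algebraMap (MvPolynomial (Fin 3) ℚ) K (MvPolynomial.X 1)
/-- The indeterminate `y`. -/
def y : K := algebraMap (MvPolynomial (Fin 3) ℚ) K (MvPolynomial.X 2)

/-- The coefficient `h_k(a,b) = (−1)^k q^{k(k−1)/2} ∏_{j=0}^{k−1}(a+q^j b) / ∏_{j=1}^{k}(1−q^j)`. -/
def hk (a b : K) (k : ℕ) : K :=
  (-1) ^ k * q ^ (k.choose 2) * (∏ j ∈ range k, (a + q ^ j * b)) /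
    (∏ j ∈ range k, (1 - q ^ (j + 1)))

/-- The series `h(z,a,b) = Σ_k h_k(a,b) z^k`. -/
def hser (a b : K) : PowerSeries K := PowerSeries.mk (hk a b)

theorem Transcendental.pow_ne_one {R A : Type*} [CommRing R] [Nontrivial R] [Ring A]
    [Algebra R A] {r : A} (hr : Transcendental R r) {n : ℕ} (hn : 0 < n) : r ^ n ≠ 1 :=
  fun h => hr (IsAlgebraic.of_pow hn (h ▸ isAlgebraic_one))

theorem transcendental_q : Transcendental ℚ q :=
  (transcendental_algebraMap_iff (IsFractionRing.injective _ K)).mpr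
    (MvPolynomial.transcendental_X ℚ 0)

theorem one_sub_q_pow_succ_ne_zero (n : ℕ) : (1 : K) - q ^ (n + 1) ≠ 0 :=
  sub_ne_zero.mpr (transcendental_q.pow_ne_one n.succ_pos).symm

/-- Comparing coefficients of `z^(k+1)`, the functional equation is exactly this recurrence. -/
theorem hk_succ (a b : K) (k : ℕ) :
    (1 - q ^ (k + 1)) * hk a b (k + 1) = -(q ^ k * (a + q ^ k * b)) * hk a b k := by
  have hden : ∏ j ∈ range k, ((1 : K) - q ^ (j + 1)) ≠ 0 :=
    prod_ne_zero_iff.mpr fun j _ => one_sub_q_pow_succ_ne_zero j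
  unfold hk
  rw [prod_range_succ, prod_range_succ, Nat.choose_succ_succ, Nat.choose_one_right,
    mul_div_assoc', mul_div_assoc',
    div_eq_div_iff (mul_ne_zero hden (one_sub_q_pow_succ_ne_zero k)) hden]
  ring

/-- The functional equation `h(qz) = h(z) + xz·h(qz) + yz·h(q²z)` for the series
`h(z,x,y) = Σ_k h_k(x,y) z^k`, as formal power series in `z` over `ℚ(q,x,y)`. -/
theorem h_functional_equation :
    rescale q (hser x y) =
      hser x y + C x * X * rescale q (hser x y)
        + C y * X * rescale (q ^ 2) (hser x y) := by
  ext k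
  cases k with
  | zero =>
      simp [hser, coeff_rescale, hk]
  | succ k =>
      simp only [map_add, coeff_rescale, mul_assoc, coeff_C_mul, coeff_succ_X_mul, hser,
        coeff_mk]
      linear_combination -hk_succ x y k

end
end

section
/- Let F(z,x,y) ∈ ℚ(q,x,y)[[z]] be the unique power series with constant term 1 satisfying F(z) = 1 + xz·F(z) + yz·F(z)·F(qz), and define f(z,x,y) = (x + y·F(z,x,y))/(x+y). Then f satisfies f(z,x,y) = 1 − xz·f(qz,x,y) + (x+y)·z·f(z,x,y)·f(qz,x,y). -/
noncomputable section
open PowerSeries Finset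

/-! Write `s = x + y`. Substituting `qz` is a ring map fixing constants, so `s·f = x + yF` and
`s·f(qz) = x + yF(qz)`. Multiplying the equation for `F` by `y` and eliminating `yF` and `yF(qz)`
through these two relations gives the equation for `f`. -/

theorem functional_equation_of_affine {R : Type*} [CommRing R] {a b w z F G : R}
    (hw : w * (a + b) = 1) (hF : F = 1 + a * z * F + b * z * (F * G)) :
    w * (a + b * F) =
      1 - a * z * (w * (a + b * G)) + (a + b) * z * (w * (a + b * F) * (w * (a + b * G))) := by
  linear_combination (1 - w * z * (a + b * F) * (a + b * G)) * hw + w * b * hF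

theorem PowerSeries.rescale_C {R : Type*} [CommSemiring R] (a c : R) :
    rescale a (C c) = C c := by
  ext n
  rcases n with _ | n <;> simp [coeff_C]

theorem x_add_y_ne_zero : x + y ≠ 0 := by
  rw [x, y, ← map_add, map_ne_zero_iff _ (IsFractionRing.injective (MvPolynomial (Fin 3) ℚ) K)]
  intro h
  simpa using congrArg (MvPolynomial.eval fun _ => (1 : ℚ)) h

theorem f_functional_equation_general (F f : PowerSeries K)
    (hF : F = 1 + C x * X * F + C y * X * (F * rescale q F))
    (hf : f = C (x + y)⁻¹ * (C x + C y * F)) :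
    f = 1 - C x * X * rescale q f + C (x + y) * X * (f * rescale q f) := by
  have hw : C (x + y)⁻¹ * (C x + C y) = 1 := by
    rw [← map_add, ← map_mul, inv_mul_cancel₀ x_add_y_ne_zero, map_one]
  have hres : rescale q f = C (x + y)⁻¹ * (C x + C y * rescale q F) := by
    simp only [hf, map_mul, map_add, rescale_C]
  rw [hres, hf, map_add]
  exact functional_equation_of_affine hw hF

/-- If `F(z,x,y)` is the power series with constant term `1` satisfying
`F = 1 + xz·F(z) + yz·F(z)F(qz)` and `f = (x + y·F)/(x+y)`, then
`f(z) = 1 − xz·f(qz) + (x+y)z·f(z)·f(qz)` (formula (2.4)). -/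
theorem f_functional_equation (F f : PowerSeries K)
    (h1 : constantCoeff F = 1)
    (hF : F = 1 + C x * X * F + C y * X * (F * rescale q F))
    (hf : f = C (x + y)⁻¹ * (C x + C y * F)) :
    f = 1 - C x * X * rescale q f + C (x + y) * X * (f * rescale q f) :=
  f_functional_equation_general F f hF hf

end
end

section
/- With h(z,x,y) as in the previous definitions, the series f(z,x,y) := h(z,x,qy)/h(z,x,y) equals (x + y·F(z,x,y))/(x+y), where F(z,x,y) = h(qz,x,y)/h(z,x,y). -/
/-!
Coefficientwise, `(x + y) h_k(x, qy) = (x + q^k y) h_k(x, y)`: the products `∏_{j<k} (x + q^{j+1} y)`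
and `∏_{j<k} (x + q^j y)` both extend to `∏_{j≤k} (x + q^j y)`, one by its first factor `x + y`,
the other by its last factor `x + q^k y`. Summed over `k` this says
`(x + y) h(z, x, qy) = x h(z, x, y) + y h(qz, x, y)`; dividing by `(x + y) h(z, x, y)` gives the claim.
-/

noncomputable section
open PowerSeries Finset

theorem add_mul_prod_range_pow_succ_mul {R : Type*} [CommRing R] (r a b : R) (k : ℕ) :
    (a + b) * ∏ j ∈ range k, (a + r ^ (j + 1) * b) =
      (a + r ^ k * b) * ∏ j ∈ range k, (a + r ^ j * b) := by
  have first := prod_range_succ' (fun j => a + r ^ j * b) k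
  have last := prod_range_succ (fun j => a + r ^ j * b) k
  simp only [pow_zero, one_mul] at first
  rw [mul_comm, mul_comm _ (∏ j ∈ range k, _), ← first, last]

theorem add_mul_hk_q_mul (a b : K) (k : ℕ) :
    (a + b) * hk a (q * b) k = (a + b * q ^ k) * hk a b k := by
  have shift : ∀ j ∈ range k, a + q ^ j * (q * b) = a + q ^ (j + 1) * b := fun j _ => by ring
  simp only [hk, mul_div_assoc', prod_congr rfl shift]
  congr 1
  linear_combination (-1 : K) ^ k * q ^ k.choose 2 * add_mul_prod_range_pow_succ_mul q a b k

theorem C_add_mul_hser_q_mul (a b : K) :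
    C (a + b) * hser a (q * b) = C a * hser a b + C b * rescale q (hser a b) := by
  ext k
  rw [coeff_C_mul, map_add, coeff_C_mul, coeff_C_mul, coeff_rescale]
  simp only [hser, coeff_mk]
  linear_combination add_mul_hk_q_mul a b k

theorem constantCoeff_hser (a b : K) : constantCoeff (hser a b) = 1 := by
  simp [hser, hk]

/-- Formula (2.10): `f(z,x,y) := h(z,x,qy)/h(z,x,y)` equals `(x + y·F(z,x,y))/(x+y)`,
where `F(z,x,y) = h(qz,x,y)/h(z,x,y)`. -/
theorem f_as_h_quotient :
    hser x (q * y) * (hser x y)⁻¹ =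
      C (x + y)⁻¹ * (C x + C y * (rescale q (hser x y) * (hser x y)⁻¹)) := by
  have hinv : hser x y * (hser x y)⁻¹ = 1 :=
    PowerSeries.mul_inv_cancel _ (by simp [constantCoeff_hser])
  have hdiv : hser x (q * y) = C (x + y)⁻¹ * (C x * hser x y + C y * rescale q (hser x y)) := by
    rw [← C_add_mul_hser_q_mul, ← mul_assoc, ← map_mul, inv_mul_cancel₀ x_add_y_ne_zero,
      map_one, one_mul]
  rw [hdiv, mul_assoc, add_mul, mul_assoc (C x), hinv, mul_one, mul_assoc]

end
end

section
/- With h(z,x,y) = Σ_{k≥0} (−1)^k q^{k(k−1)/2} ∏_{j=0}^{k−1}(x+q^j y)/∏_{j=1}^{k}(1−q^j) z^k and H(z,x,y) = Σ_{k≥0} (−1)^k q^{k²−k} (yz)^k/((q;q)_k (xz;q)_k), the identity h(z,x,y)·e(xz) = H(z,x,y) holds, where e(t) = Σ_{n≥0} t^n/(q;q)_n is the q-exponential series. Equivalently h(z,x,y)/H(z,x,y) = 1/e(xz). -/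
noncomputable section
open PowerSeries Finset

/-- The polynomial `(xz;q)_k = ∏_{i=0}^{k-1} (1 − q^i x z)` as a power series in `z`. -/
def Pk (k : ℕ) : PowerSeries K := ∏ i ∈ range k, (1 - C (q ^ i * x) * X)

/-- The series `H(z,x,y) = Σ_{k≥0} (−1)^k q^{k²−k} (yz)^k / ((q;q)_k (xz;q)_k)`,
written via its `z`-coefficients: the coefficient of `z^m` is
`Σ_{k=0}^{m} (−1)^k q^{k²−k} y^k / (q;q)_k · [z^{m−k}] (xz;q)_k⁻¹`. -/
def Hser : PowerSeries K :=
  PowerSeries.mk fun m =>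
    ∑ k ∈ range (m + 1),
      (-1) ^ k * q ^ (k ^ 2 - k) * y ^ k / (∏ j ∈ range k, (1 - q ^ (j + 1))) *
        coeff (m - k) (Pk k)⁻¹

/-- The `q`-exponential series evaluated at `xz`: `e(xz) = Σ_n (xz)^n / (q;q)_n`. -/
def exz : PowerSeries K :=
  PowerSeries.mk fun n => x ^ n / ∏ j ∈ range n, (1 - q ^ (j + 1))

/-!
Compare coefficients of `z^m`. Gauss's `q`-binomial theorem
`∏_{l<k} (a + q^l b) = Σ_{i+j=k} [k, i]_q q^{i(i-1)/2} b^i a^j` expands `[z^m] h · e(xz)` into a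
sum over `i + j + l = m`. For fixed `i` (the power of `y`), the sum over `j + l = m - i` is again a
`q`-binomial expansion, now of `(q^i;q)_{m-i}`, and `x^n (q^i;q)_n / (q;q)_n` is the coefficient of
`z^n` in `1 / (xz;q)_i`.
-/

lemma Nat.choose_two_succ (i : ℕ) : (i + 1).choose 2 = i.choose 2 + i := by
  rw [Nat.choose_succ_succ', Nat.choose_one_right, add_comm]

lemma Nat.choose_two_add (i j : ℕ) : (i + j).choose 2 = i.choose 2 + j.choose 2 + i * j := by
  induction j with
  | zero => simp
  | succ j ih => rw [← add_assoc, Nat.choose_two_succ, ih, Nat.choose_two_succ]; ring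

lemma Nat.sq_sub_self_eq_choose_two_add (i : ℕ) : i ^ 2 - i = i.choose 2 + i.choose 2 := by
  rw [Nat.choose_two_right, ← two_mul, Nat.mul_div_cancel' (Nat.even_mul_pred_self i).two_dvd,
    sq, Nat.mul_sub_one]

section CommRing
variable {R : Type*} [CommRing R]

def qPochhammer (a q : R) (n : ℕ) : R := ∏ j ∈ range n, (1 - a * q ^ j)

@[simp] lemma qPochhammer_zero (a q : R) : qPochhammer a q 0 = 1 := prod_range_zero _

lemma qPochhammer_succ (a q : R) (n : ℕ) :
    qPochhammer a q (n + 1) = qPochhammer a q n * (1 - a * q ^ n) :=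
  prod_range_succ _ n

lemma qPochhammer_succ' (a q : R) (n : ℕ) :
    qPochhammer a q (n + 1) = (1 - a) * qPochhammer (a * q) q n := by
  simp only [qPochhammer, prod_range_succ', pow_zero, mul_one, pow_succ, mul_assoc, mul_comm q]
  ring

lemma qPochhammer_one_succ (q : R) (n : ℕ) : qPochhammer 1 q (n + 1) = 0 := by
  simp [qPochhammer_succ']

lemma qPochhammer_eq_prod_add (a q : R) (n : ℕ) :
    qPochhammer a q n = ∏ j ∈ range n, (1 + q ^ j * -a) :=
  prod_congr rfl fun _ _ => by ring

lemma prod_one_sub_pow_succ_eq_qPochhammer (q : R) (n : ℕ) :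
    ∏ j ∈ range n, (1 - q ^ (j + 1)) = qPochhammer q q n :=
  prod_congr rfl fun _ _ => by rw [pow_succ']

def qBinomial (q : R) : ℕ → ℕ → R
  | _, 0 => 1
  | 0, _ + 1 => 0
  | n + 1, k + 1 => qBinomial q n k + q ^ (k + 1) * qBinomial q n (k + 1)

@[simp] lemma qBinomial_zero_right (q : R) (n : ℕ) : qBinomial q n 0 = 1 := by
  cases n <;> rfl

lemma qBinomial_succ_succ (q : R) (n k : ℕ) :
    qBinomial q (n + 1) (k + 1) = qBinomial q n k + q ^ (k + 1) * qBinomial q n (k + 1) := rfl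

lemma qBinomial_eq_zero_of_lt (q : R) {n k : ℕ} (h : n < k) : qBinomial q n k = 0 := by
  induction n generalizing k with
  | zero => obtain ⟨k, rfl⟩ := Nat.exists_eq_succ_of_ne_zero h.ne'; rfl
  | succ n ih =>
    obtain ⟨k, rfl⟩ := Nat.exists_eq_succ_of_ne_zero (Nat.ne_zero_of_lt h)
    rw [qBinomial_succ_succ, ih (by omega), ih (by omega), mul_zero, add_zero]

@[simp] lemma qBinomial_self (q : R) (n : ℕ) : qBinomial q n n = 1 := by
  induction n with
  | zero => rfl
  | succ n ih => rw [qBinomial_succ_succ, ih, qBinomial_eq_zero_of_lt q n.lt_succ_self]; simp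

lemma qBinomial_add_mul_qPochhammer (q : R) (i j : ℕ) :
    qBinomial q (i + j) i * qPochhammer q q i * qPochhammer q q j = qPochhammer q q (i + j) := by
  induction i generalizing j with
  | zero => simp
  | succ i ih =>
    induction j with
    | zero => simp
    | succ j ihj =>
      have hi := ih (j + 1)
      rw [← add_assoc] at hi
      rw [add_right_comm] at ihj
      rw [show i + 1 + (j + 1) = i + j + 1 + 1 by ring, qBinomial_succ_succ]
      -- Pascal's rule and `(1 - q^{i+1}) + q^{i+1} (1 - q^{j+1}) = 1 - q^{i+j+2}`
      linear_combination (1 - q * q ^ i) * hi + q ^ (i + 1) * (1 - q * q ^ j) * ihj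
        + qBinomial q (i + j + 1) i * qPochhammer q q (j + 1) * qPochhammer_succ q q i
        + q ^ (i + 1) * qBinomial q (i + j + 1) (i + 1) * qPochhammer q q (i + 1) *
          qPochhammer_succ q q j
        - qPochhammer_succ q q (i + j + 1)

theorem prod_add_pow_mul_eq_sum_antidiagonal (q a b : R) (n : ℕ) :
    ∏ l ∈ range n, (a + q ^ l * b) =
      ∑ p ∈ antidiagonal n, qBinomial q n p.1 * q ^ p.1.choose 2 * b ^ p.1 * a ^ p.2 := by
  induction n generalizing b with
  | zero => simp
  | succ n ih =>
    set g : ℕ × ℕ → R := fun p => qBinomial q n p.1 * q ^ (p.1.choose 2 + p.1) * b ^ p.1 * a ^ p.2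
    -- peel `antidiagonal (n + 1)` at either end; the term `g (n + 1, 0)` vanishes
    have hshift : ∑ p ∈ antidiagonal n, g (p.1, p.2 + 1) =
        a ^ (n + 1) + ∑ p ∈ antidiagonal n, g (p.1 + 1, p.2) := by
      have h := (Nat.sum_antidiagonal_succ (n := n) (f := g)).symm.trans Nat.sum_antidiagonal_succ'
      simp only [g, qBinomial_eq_zero_of_lt q n.lt_succ_self] at h
      simp only [g]
      simpa using h.symm
    calc ∏ l ∈ range (n + 1), (a + q ^ l * b)
        = (∏ l ∈ range n, (a + q ^ l * (q * b))) * (a + b) := by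
          rw [prod_range_succ']; simp [pow_succ, mul_assoc]
      _ = ∑ p ∈ antidiagonal n, g (p.1, p.2 + 1) + ∑ p ∈ antidiagonal n, g p * b := by
          simp only [ih, sum_mul, mul_add]
          congr 1 <;> refine sum_congr rfl fun p _ => ?_ <;> simp only [g] <;> ring
      _ = _ := by
          rw [hshift, Nat.sum_antidiagonal_succ, add_assoc, ← sum_add_distrib]
          simp only [g, qBinomial_succ_succ, Nat.choose_two_succ]
          congr 1
          · simp
          · refine sum_congr rfl fun p _ => ?_
            ring

end CommRing

lemma sum_antidiagonal_sum_antidiagonal_fst {M : Type*} [AddCommMonoid M] (f : ℕ → ℕ → ℕ → M)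
    (m : ℕ) :
    ∑ p ∈ antidiagonal m, ∑ r ∈ antidiagonal p.1, f r.1 r.2 p.2 =
      ∑ p ∈ antidiagonal m, ∑ r ∈ antidiagonal p.2, f p.1 r.1 r.2 := by
  simp only [sum_sigma']
  apply sum_nbij' (fun ⟨⟨_, l⟩, ⟨i, j⟩⟩ ↦ ⟨(i, j + l), (j, l)⟩)
    (fun ⟨⟨i, _⟩, ⟨j, l⟩⟩ ↦ ⟨(i + j, l), (i, j)⟩) <;> aesop (add simp [add_assoc])

section Field
variable {F : Type*} [Field F] {q : F}

lemma qBinomial_add_eq_div (hq : ∀ n, qPochhammer q q n ≠ 0) (i j : ℕ) :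
    qBinomial q (i + j) i =
      qPochhammer q q (i + j) / (qPochhammer q q i * qPochhammer q q j) := by
  rw [eq_div_iff (mul_ne_zero (hq i) (hq j)), ← mul_assoc, qBinomial_add_mul_qPochhammer]

theorem prod_add_pow_mul_div_qPochhammer (hq : ∀ n, qPochhammer q q n ≠ 0) (a b : F) (n : ℕ) :
    (∏ l ∈ range n, (a + q ^ l * b)) / qPochhammer q q n =
      ∑ p ∈ antidiagonal n,
        q ^ p.1.choose 2 * b ^ p.1 / qPochhammer q q p.1 * (a ^ p.2 / qPochhammer q q p.2) := by
  rw [prod_add_pow_mul_eq_sum_antidiagonal, sum_div]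
  refine sum_congr rfl fun p hp => ?_
  rw [← mem_antidiagonal.1 hp, qBinomial_add_eq_div hq]
  field_simp [hq]

lemma one_sub_C_mul_X_mul_mk_qPochhammer (hq : ∀ n, qPochhammer q q n ≠ 0) (a : F) (k : ℕ) :
    (1 - C (q ^ k * a) * X) *
        PowerSeries.mk (fun n => a ^ n * qPochhammer (q ^ (k + 1)) q n / qPochhammer q q n) =
      PowerSeries.mk (fun n => a ^ n * qPochhammer (q ^ k) q n / qPochhammer q q n) := by
  ext (_ | n)
  · simp
  · have hn := hq n
    have hn' : 1 - q * q ^ n ≠ 0 := by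
      have := hq (n + 1)
      rw [qPochhammer_succ] at this
      exact right_ne_zero_of_mul this
    rw [sub_mul, one_mul, map_sub, mul_assoc, coeff_C_mul, coeff_succ_X_mul]
    simp only [coeff_mk]
    rw [qPochhammer_succ, qPochhammer_succ, qPochhammer_succ', ← pow_succ]
    rw [eq_div_iff (mul_ne_zero hn hn'), sub_mul, div_mul_cancel₀ _ (mul_ne_zero hn hn')]
    field_simp
    ring

lemma prod_one_sub_C_mul_X_mul_mk_qPochhammer (hq : ∀ n, qPochhammer q q n ≠ 0) (a : F) (k : ℕ) :
    (∏ i ∈ range k, (1 - C (q ^ i * a) * X)) *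
      PowerSeries.mk (fun n => a ^ n * qPochhammer (q ^ k) q n / qPochhammer q q n) = 1 := by
  induction k with
  | zero =>
    ext (_ | n)
    · simp
    · simp [coeff_one, qPochhammer_one_succ]
  | succ k ih =>
    rw [prod_range_succ, mul_assoc, one_sub_C_mul_X_mul_mk_qPochhammer hq, ih]

theorem coeff_inv_prod_one_sub_C_mul_X (hq : ∀ n, qPochhammer q q n ≠ 0) (a : F) (k n : ℕ) :
    coeff n (∏ i ∈ range k, (1 - C (q ^ i * a) * X))⁻¹ =
      a ^ n * qPochhammer (q ^ k) q n / qPochhammer q q n := by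
  have hc : constantCoeff (∏ i ∈ range k, (1 - C (q ^ i * a) * X)) ≠ 0 := by simp
  rw [(inv_eq_iff_mul_eq_one hc).2 (by rw [mul_comm]; exact
    prod_one_sub_C_mul_X_mul_mk_qPochhammer hq a k), coeff_mk]

theorem coeff_h_mul_qexp_eq_coeff_H (hq : ∀ n, qPochhammer q q n ≠ 0) (a b : F) (m : ℕ) :
    ∑ p ∈ antidiagonal m, (-1) ^ p.1 * q ^ p.1.choose 2 * (∏ l ∈ range p.1, (a + q ^ l * b)) /
        qPochhammer q q p.1 * (a ^ p.2 / qPochhammer q q p.2) =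
      ∑ p ∈ antidiagonal m, (-1) ^ p.1 * q ^ (p.1 ^ 2 - p.1) * b ^ p.1 / qPochhammer q q p.1 *
        (a ^ p.2 * qPochhammer (q ^ p.1) q p.2 / qPochhammer q q p.2) := by
  calc _ = ∑ p ∈ antidiagonal m, ∑ r ∈ antidiagonal p.1,
          (-1) ^ (r.1 + r.2) * q ^ (r.1 + r.2).choose 2 *
            (q ^ r.1.choose 2 * b ^ r.1 / qPochhammer q q r.1) *
            (a ^ r.2 / qPochhammer q q r.2) * (a ^ p.2 / qPochhammer q q p.2) := by
        refine sum_congr rfl fun p _ => ?_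
        rw [mul_div_assoc, prod_add_pow_mul_div_qPochhammer hq, mul_sum, sum_mul]
        refine sum_congr rfl fun r hr => ?_
        rw [← mem_antidiagonal.1 hr]
        ring
    _ = ∑ p ∈ antidiagonal m, ∑ r ∈ antidiagonal p.2,
          (-1) ^ (p.1 + r.1) * q ^ (p.1 + r.1).choose 2 *
            (q ^ p.1.choose 2 * b ^ p.1 / qPochhammer q q p.1) *
            (a ^ r.1 / qPochhammer q q r.1) * (a ^ r.2 / qPochhammer q q r.2) :=
        sum_antidiagonal_sum_antidiagonal_fst (fun i j l => (-1) ^ (i + j) * q ^ (i + j).choose 2 *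
          (q ^ i.choose 2 * b ^ i / qPochhammer q q i) * (a ^ j / qPochhammer q q j) *
          (a ^ l / qPochhammer q q l)) m
    _ = _ := by
        refine sum_congr rfl fun p _ => ?_
        rw [mul_div_assoc (a ^ p.2), qPochhammer_eq_prod_add (q ^ p.1),
          prod_add_pow_mul_div_qPochhammer hq, mul_sum, mul_sum]
        refine sum_congr rfl fun r hr => ?_
        rw [← mem_antidiagonal.1 hr, Nat.choose_two_add, Nat.sq_sub_self_eq_choose_two_add]
        ring

end Field

lemma q_pow_succ_ne_one (n : ℕ) : q ^ (n + 1) ≠ 1 := by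
  rw [q, ← map_pow, ← map_one (algebraMap (MvPolynomial (Fin 3) ℚ) K),
    (IsFractionRing.injective (MvPolynomial (Fin 3) ℚ) K).ne_iff, MvPolynomial.X_pow_eq_monomial,
    ← MvPolynomial.C_1, ← MvPolynomial.monomial_zero', Ne,
    (MvPolynomial.monomial_left_injective one_ne_zero).eq_iff]
  simp

lemma qPochhammer_q_q_ne_zero (n : ℕ) : qPochhammer q q n ≠ 0 :=
  prod_ne_zero_iff.2 fun j _ =>
    sub_ne_zero.2 (by rw [← pow_succ']; exact (q_pow_succ_ne_one j).symm)

/-- Formula (2.26): `h(z,x,y)·e(xz) = H(z,x,y)`. -/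
theorem h_mul_qexp_eq_H : hser x y * exz = Hser := by
  ext m
  have key := coeff_h_mul_qexp_eq_coeff_H qPochhammer_q_q_ne_zero x y m
  simp only [Nat.sum_antidiagonal_eq_sum_range_succ_mk] at key
  simpa only [coeff_mul, Nat.sum_antidiagonal_eq_sum_range_succ_mk, hser, hk, exz, Hser, Pk,
    coeff_mk, coeff_inv_prod_one_sub_C_mul_X qPochhammer_q_q_ne_zero,
    prod_one_sub_pow_succ_eq_qPochhammer] using key

end
end
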